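/- arXiv:2212.11719 — 4 statements merged into one kernel-verified Lean document; each statement's English description precedes it below -/
import Mathlib

section
/- Sequential composition inequality for KL divergence on FinStoch: for stochastic matrices f, f' : X → Y and g, g' : Y → Z between finite sets, defining D(f ∥ f') = max_{x∈X} D_KL(f_x ∥ f'_x), one has D(g∘f ∥ g'∘f') ≤ D(f ∥ f') + D(g ∥ g'), where (g∘f)(z|x) = ∑_y g(z|y)f(y|x). -/
/-!
For a fixed input `x`, put `p = f x`, `p' = f' x`. The output distributions `(g ∘ f) x` and
`(g' ∘ f') x` are the `z`-marginals of the joint weights `g(z|y) p(y)` and `g'(z|y) p'(y)`.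
The log-sum inequality shows that marginalising over `y` cannot increase the divergence, and
the chain rule `log (g p / (g' p')) = log (g / g') + log (p / p')` splits the joint divergence
into `D_KL(p ∥ p') + ∑_y p(y) D_KL(g_y ∥ g'_y)`; the average is at most `D(g ∥ g')` since `p`
is a probability vector.
-/

open scoped BigOperators

def IsProb {X : Type*} [Fintype X] (p : X → ℝ) : Prop :=
  (∀ x, 0 ≤ p x) ∧ ∑ x, p x = 1

noncomputable def KL {X : Type*} [Fintype X] (p q : X → ℝ) : EReal :=
  if ∀ x, q x = 0 → p x = 0 then
    (((∑ x, p x * Real.log (p x / q x)) : ℝ) : EReal)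
  else ⊤

/-- Divergence between channels: supremum (= maximum, as the sets are finite and
nonempty) of the pointwise KL divergences over the inputs. -/
noncomputable def KLchan {X Y : Type*} [Fintype X] [Fintype Y] (f f' : X → Y → ℝ) : EReal :=
  ⨆ x, KL (f x) (f' x)

/-- Composition of stochastic matrices (Chapman–Kolmogorov). -/
noncomputable def comp {X Y Z : Type*} [Fintype Y]
    (g : Y → Z → ℝ) (f : X → Y → ℝ) : X → Z → ℝ :=
  fun x z => ∑ y, g y z * f x y

open Finset

namespace Real

lemma sub_le_mul_log_div {x y : ℝ} (hx : 0 ≤ x) (hy : 0 ≤ y) (hxy : y = 0 → x = 0) :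
    x - y ≤ x * log (x / y) := by
  rcases hx.eq_or_lt with rfl | hx
  · simpa using hy
  have hy : 0 < y := hy.lt_of_ne fun h => hx.ne' (hxy h.symm)
  calc x - y = x * (1 - (x / y)⁻¹) := by field_simp
    _ ≤ x * log (x / y) := by gcongr; exact one_sub_inv_le_log_of_pos (by positivity)

lemma sum_mul_log_div_sum_le {ι : Type*} (s : Finset ι) {a c : ι → ℝ}
    (ha : ∀ i ∈ s, 0 ≤ a i) (hc : ∀ i ∈ s, 0 ≤ c i) (hac : ∀ i ∈ s, c i = 0 → a i = 0) :
    (∑ i ∈ s, a i) * log ((∑ i ∈ s, a i) / ∑ i ∈ s, c i) ≤ ∑ i ∈ s, a i * log (a i / c i) := by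
  set A := ∑ i ∈ s, a i
  set C := ∑ i ∈ s, c i
  rcases (show 0 ≤ A from sum_nonneg ha).eq_or_lt with hA | hA
  · have ha0 : ∀ i ∈ s, a i = 0 := (sum_eq_zero_iff_of_nonneg ha).1 hA.symm
    rw [← hA, zero_mul, sum_eq_zero fun i hi => by rw [ha0 i hi, zero_mul]]
  have hC : 0 < C := (show 0 ≤ C from sum_nonneg hc).lt_of_ne fun hC => hA.ne <|
    (sum_eq_zero fun i hi => hac i hi ((sum_eq_zero_iff_of_nonneg hc).1 hC.symm i hi)).symm
  set t := A / C
  have ht : 0 < t := div_pos hA hC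
  have key : ∀ i ∈ s, a i - c i * t ≤ a i * log (a i / c i) - a i * log t := by
    intro i hi
    have h := sub_le_mul_log_div (ha i hi) (mul_nonneg (hc i hi) ht.le)
      fun h => hac i hi ((mul_eq_zero.1 h).resolve_right ht.ne')
    rcases eq_or_ne (a i) 0 with hai | hai
    · simpa [hai] using h
    rwa [← div_div, log_div (div_ne_zero hai (mt (hac i hi) hai)) ht.ne', mul_sub] at h
  have hsum := sum_le_sum key
  rw [sum_sub_distrib, sum_sub_distrib, ← sum_mul, ← sum_mul] at hsum
  change A - C * t ≤ _ - A * log t at hsum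
  rw [mul_div_cancel₀ _ hC.ne'] at hsum
  linarith

lemma mul_mul_log_mul_div_mul {a b a' b' : ℝ} (ha : a' = 0 → a = 0) (hb : b' = 0 → b = 0) :
    a * b * log (a * b / (a' * b')) = b * (a * log (a / a')) + a * (b * log (b / b')) := by
  rcases eq_or_ne a 0 with rfl | ha0
  · simp
  rcases eq_or_ne b 0 with rfl | hb0
  · simp
  rw [mul_div_mul_comm, log_mul (div_ne_zero ha0 (mt ha ha0)) (div_ne_zero hb0 (mt hb hb0))]
  ring

end Real

open Real

lemma sum_mul_log_div_comp_le {Y Z : Type*} [Fintype Y] [Fintype Z] {p p' : Y → ℝ}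
    {g g' : Y → Z → ℝ} (hp : ∀ y, 0 ≤ p y) (hp' : ∀ y, 0 ≤ p' y) (hg : ∀ y z, 0 ≤ g y z)
    (hg' : ∀ y z, 0 ≤ g' y z) (hg1 : ∀ y, ∑ z, g y z = 1)
    (hpp' : ∀ y, p' y = 0 → p y = 0) (hgg' : ∀ y z, g' y z = 0 → g y z = 0) :
    ∑ z, (∑ y, g y z * p y) * log ((∑ y, g y z * p y) / ∑ y, g' y z * p' y)
      ≤ ∑ y, p y * log (p y / p' y) + ∑ y, p y * ∑ z, g y z * log (g y z / g' y z) := by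
  calc _ ≤ ∑ z, ∑ y, g y z * p y * log (g y z * p y / (g' y z * p' y)) := by
        refine sum_le_sum fun z _ => sum_mul_log_div_sum_le _
          (fun y _ => mul_nonneg (hg y z) (hp y)) (fun y _ => mul_nonneg (hg' y z) (hp' y))
          fun y _ h => ?_
        rcases mul_eq_zero.1 h with h | h <;> simp [hgg' y z, hpp' y, h]
    _ = ∑ y, ∑ z, (p y * (g y z * log (g y z / g' y z)) + g y z * (p y * log (p y / p' y))) := by
        rw [sum_comm]
        exact sum_congr rfl fun y _ => sum_congr rfl fun z _ =>
          mul_mul_log_mul_div_mul (hgg' y z) (hpp' y)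
    _ = _ := by
        simp only [sum_add_distrib, ← mul_sum, ← sum_mul, hg1, one_mul]
        ring

lemma KL_ne_bot {X : Type*} [Fintype X] (p q : X → ℝ) : KL p q ≠ ⊥ := by
  unfold KL; split <;> simp

lemma KL_ne_top_iff {X : Type*} [Fintype X] {p q : X → ℝ} :
    KL p q ≠ ⊤ ↔ ∀ x, q x = 0 → p x = 0 := by
  unfold KL; split_ifs with h <;> simpa using h

lemma KL_of_support {X : Type*} [Fintype X] {p q : X → ℝ} (h : ∀ x, q x = 0 → p x = 0) :
    KL p q = ((∑ x, p x * log (p x / q x) : ℝ) : EReal) :=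
  if_pos h

lemma KL_comp_le_add {Y Z : Type*} [Fintype Y] [Fintype Z] {p p' : Y → ℝ} {g g' : Y → Z → ℝ}
    (hp : IsProb p) (hp' : ∀ y, 0 ≤ p' y) (hg : ∀ y, IsProb (g y)) (hg' : ∀ y z, 0 ≤ g' y z)
    {B : EReal} (hB : ∀ y, KL (g y) (g' y) ≤ B) :
    KL (fun z => ∑ y, g y z * p y) (fun z => ∑ y, g' y z * p' y) ≤ KL p p' + B := by
  obtain ⟨y₀⟩ : Nonempty Y := by
    by_contra h
    rw [not_nonempty_iff] at h
    simpa using hp.2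
  have hB_ne_bot : B ≠ ⊥ := ne_bot_of_le_ne_bot (KL_ne_bot _ _) (hB y₀)
  rcases eq_or_ne (KL p p') ⊤ with hKp | hKp
  · rw [hKp, EReal.top_add_of_ne_bot hB_ne_bot]; exact le_top
  rcases eq_or_ne B ⊤ with rfl | hB_ne_top
  · rw [EReal.add_top_of_ne_bot (KL_ne_bot _ _)]; exact le_top
  lift B to ℝ using ⟨hB_ne_top, hB_ne_bot⟩
  have hgg' : ∀ y z, g' y z = 0 → g y z = 0 := fun y =>
    KL_ne_top_iff.1 ((hB y).trans_lt (EReal.coe_lt_top B)).ne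
  have hpp' : ∀ y, p' y = 0 → p y = 0 := KL_ne_top_iff.1 hKp
  have hKg : ∀ y, ∑ z, g y z * log (g y z / g' y z) ≤ B := fun y => by
    simpa [KL_of_support (hgg' y)] using hB y
  have hcomp : ∀ z, ∑ y, g' y z * p' y = 0 → ∑ y, g y z * p y = 0 := fun z hz => by
    rw [sum_eq_zero_iff_of_nonneg fun y _ => mul_nonneg (hg' y z) (hp' y)] at hz
    refine sum_eq_zero fun y hy => ?_
    rcases mul_eq_zero.1 (hz y hy) with h | h <;> simp [hgg' y z, hpp' y, h]
  rw [KL_of_support hcomp, KL_of_support hpp', ← EReal.coe_add, EReal.coe_le_coe_iff]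
  calc _ ≤ ∑ y, p y * log (p y / p' y) + ∑ y, p y * ∑ z, g y z * log (g y z / g' y z) :=
        sum_mul_log_div_comp_le hp.1 hp' (fun y => (hg y).1) hg' (fun y => (hg y).2) hpp' hgg'
    _ ≤ ∑ y, p y * log (p y / p' y) + ∑ y, p y * B := by
        gcongr with y; exacts [hp.1 y, hKg y]
    _ = ∑ y, p y * log (p y / p' y) + B := by rw [← sum_mul, hp.2, one_mul]

theorem kl_comp_le_general {X Y Z : Type*} [Fintype X] [Fintype Y] [Fintype Z]
    (f f' : X → Y → ℝ) (g g' : Y → Z → ℝ)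
    (hf : ∀ x, IsProb (f x)) (hf' : ∀ x, IsProb (f' x))
    (hg : ∀ y, IsProb (g y)) (hg' : ∀ y, IsProb (g' y)) :
    KLchan (comp g f) (comp g' f') ≤ KLchan f f' + KLchan g g' := by
  refine iSup_le fun x => ?_
  calc KL (comp g f x) (comp g' f' x)
      ≤ KL (f x) (f' x) + KLchan g g' :=
        KL_comp_le_add (hf x) (hf' x).1 hg (fun y => (hg' y).1) fun y =>
          le_iSup (fun y => KL (g y) (g' y)) y
    _ ≤ KLchan f f' + KLchan g g' := by
        gcongr
        exact le_iSup (fun x => KL (f x) (f' x)) x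

/-- Sequential composition inequality for KL divergence on FinStoch. -/
theorem kl_comp_le {X Y Z : Type*} [Fintype X] [Fintype Y] [Fintype Z]
    [Nonempty X] [Nonempty Y] [Nonempty Z]
    (f f' : X → Y → ℝ) (g g' : Y → Z → ℝ)
    (hf : ∀ x, IsProb (f x)) (hf' : ∀ x, IsProb (f' x))
    (hg : ∀ y, IsProb (g y)) (hg' : ∀ y, IsProb (g' y)) :
    KLchan (comp g f) (comp g' f') ≤ KLchan f f' + KLchan g g' :=
  kl_comp_le_general f f' g g' hf hf' hg hg'
end

section
/- Generalized chain rule inequality for the Rényi divergence with α > 1 (finite case): for probability distributions p, p' on a finite set X and stochastic matrices f, f' : X → Y, the joints satisfy D_α(fp ∥ f'p') ≤ D_α(p ∥ p') + max_{x∈X} D_α(f_x ∥ f'_x). -/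
open scoped BigOperators

/-- Rényi divergence of order `α`, valued in `EReal`, with value `⊤` when
absolute continuity fails. -/
noncomputable def RenyiD {X : Type*} [Fintype X] (α : ℝ) (p q : X → ℝ) : EReal :=
  if ∀ x, q x = 0 → p x = 0 then
    ((((α - 1)⁻¹ * Real.log (∑ x, p x ^ α / q x ^ (α - 1))) : ℝ) : EReal)
  else ⊤

/-! For `α > 1` and absolutely continuous marginals and channels, the Rényi sum
`∑ p^α / q^(α-1)` of the joints splits as `∑ₓ (p x)^α / (p' x)^(α-1) · Q(x)`, where `Q(x)` is the
Rényi sum of the channels at `x`. Bounding `Q(x)` by its maximum factors this as a product,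
and the increasing map `(α - 1)⁻¹ log` turns the product into the sum of divergences. If
absolute continuity fails somewhere, the right-hand side is `⊤`. -/

open Finset

section

variable {X Y : Type*}

def jointDist (p : X → ℝ) (f : X → Y → ℝ) : X × Y → ℝ :=
  fun xy => p xy.1 * f xy.1 xy.2

lemma jointDist_absCont {p q : X → ℝ} {f g : X → Y → ℝ} (hpq : ∀ x, q x = 0 → p x = 0)
    (hfg : ∀ x y, g x y = 0 → f x y = 0) (xy : X × Y) :
    jointDist q g xy = 0 → jointDist p f xy = 0 := by
  intro h
  rcases mul_eq_zero.mp h with h | h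
  · simp [jointDist, hpq _ h]
  · simp [jointDist, hfg _ _ h]

variable [Fintype X]

noncomputable def renyiSum (α : ℝ) (p q : X → ℝ) : ℝ :=
  ∑ x, p x ^ α / q x ^ (α - 1)

lemma renyiD_of_absCont {α : ℝ} {p q : X → ℝ} (h : ∀ x, q x = 0 → p x = 0) :
    RenyiD α p q = (((α - 1)⁻¹ * Real.log (renyiSum α p q) : ℝ) : EReal) :=
  if_pos h

lemma renyiD_of_not_absCont {α : ℝ} {p q : X → ℝ} (h : ¬∀ x, q x = 0 → p x = 0) :
    RenyiD α p q = ⊤ :=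
  if_neg h

lemma renyiD_ne_bot (α : ℝ) (p q : X → ℝ) : RenyiD α p q ≠ ⊥ := by
  unfold RenyiD
  split
  exacts [EReal.coe_ne_bot _, top_ne_bot]

lemma IsProb.exists_ne_zero {p : X → ℝ} (hp : IsProb p) : ∃ x, p x ≠ 0 := by
  obtain ⟨x, -, hx⟩ := exists_ne_zero_of_sum_ne_zero (hp.2.trans_ne one_ne_zero)
  exact ⟨x, hx⟩

lemma renyiSum_pos {α : ℝ} {p q : X → ℝ} (hp : ∀ x, 0 ≤ p x) (hq : ∀ x, 0 ≤ q x)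
    (hac : ∀ x, q x = 0 → p x = 0) (hp0 : ∃ x, p x ≠ 0) : 0 < renyiSum α p q := by
  obtain ⟨x, hx⟩ := hp0
  refine sum_pos' (fun x _ => by have := hp x; have := hq x; positivity) ⟨x, mem_univ x, ?_⟩
  have hpx : 0 < p x := (hp x).lt_of_ne' hx
  have hqx : 0 < q x := (hq x).lt_of_ne' fun h => hx (hac x h)
  positivity

variable [Fintype Y]

lemma IsProb.jointDist {p : X → ℝ} {f : X → Y → ℝ} (hp : IsProb p) (hf : ∀ x, IsProb (f x)) :
    IsProb (jointDist p f) := by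
  refine ⟨fun xy => mul_nonneg (hp.1 _) ((hf _).1 _), ?_⟩
  simp only [_root_.jointDist, Fintype.sum_prod_type, ← mul_sum, fun x => (hf x).2, mul_one, hp.2]

lemma renyiSum_jointDist (α : ℝ) {p q : X → ℝ} {f g : X → Y → ℝ} (hp : ∀ x, 0 ≤ p x)
    (hq : ∀ x, 0 ≤ q x) (hf : ∀ x y, 0 ≤ f x y) (hg : ∀ x y, 0 ≤ g x y) :
    renyiSum α (jointDist p f) (jointDist q g)
      = ∑ x, p x ^ α / q x ^ (α - 1) * renyiSum α (f x) (g x) := by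
  simp only [renyiSum, jointDist, Fintype.sum_prod_type, mul_sum]
  refine sum_congr rfl fun x _ => sum_congr rfl fun y _ => ?_
  rw [Real.mul_rpow (hp x) (hf x y), Real.mul_rpow (hq x) (hg x y), div_mul_div_comm]

lemma renyiSum_jointDist_le (α : ℝ) {p q : X → ℝ} {f g : X → Y → ℝ} (hp : ∀ x, 0 ≤ p x)
    (hq : ∀ x, 0 ≤ q x) (hf : ∀ x y, 0 ≤ f x y) (hg : ∀ x y, 0 ≤ g x y) {x₀ : X}
    (hx₀ : ∀ x, renyiSum α (f x) (g x) ≤ renyiSum α (f x₀) (g x₀)) :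
    renyiSum α (jointDist p f) (jointDist q g)
      ≤ renyiSum α p q * renyiSum α (f x₀) (g x₀) := by
  rw [renyiSum_jointDist α hp hq hf hg, renyiSum, sum_mul]
  gcongr with x
  · have := hp x; have := hq x; positivity
  · exact hx₀ x

lemma inv_sub_one_mul_log_le_add {α a b c : ℝ} (hα : 1 < α) (ha : 0 < a) (hb : 0 < b)
    (hc : 0 < c) (habc : a ≤ b * c) :
    (α - 1)⁻¹ * Real.log a ≤ (α - 1)⁻¹ * Real.log b + (α - 1)⁻¹ * Real.log c := by
  rw [← mul_add, ← Real.log_mul hb.ne' hc.ne']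
  have : 0 ≤ (α - 1)⁻¹ := inv_nonneg.2 (sub_nonneg.2 hα.le)
  gcongr

lemma renyiD_jointDist_le_of_absCont {α : ℝ} (hα : 1 < α) {p q : X → ℝ} {f g : X → Y → ℝ}
    (hp : IsProb p) (hq : ∀ x, 0 ≤ q x) (hf : ∀ x, IsProb (f x)) (hg : ∀ x y, 0 ≤ g x y)
    (hpq : ∀ x, q x = 0 → p x = 0) (hfg : ∀ x y, g x y = 0 → f x y = 0) {x₀ : X}
    (hx₀ : ∀ x, renyiSum α (f x) (g x) ≤ renyiSum α (f x₀) (g x₀)) :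
    RenyiD α (jointDist p f) (jointDist q g) ≤ RenyiD α p q + RenyiD α (f x₀) (g x₀) := by
  have hjoint := hp.jointDist hf
  rw [renyiD_of_absCont (jointDist_absCont hpq hfg), renyiD_of_absCont hpq,
    renyiD_of_absCont (hfg x₀), ← EReal.coe_add, EReal.coe_le_coe_iff]
  exact inv_sub_one_mul_log_le_add hα
    (renyiSum_pos hjoint.1 (fun _ => mul_nonneg (hq _) (hg _ _)) (jointDist_absCont hpq hfg)
      hjoint.exists_ne_zero)
    (renyiSum_pos hp.1 hq hpq hp.exists_ne_zero)
    (renyiSum_pos (hf x₀).1 (hg x₀) (hfg x₀) (hf x₀).exists_ne_zero)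
    (renyiSum_jointDist_le α hp.1 hq (fun x => (hf x).1) hg hx₀)

end

theorem renyi_joint_le_general {X Y : Type*} [Fintype X] [Fintype Y]
    (α : ℝ) (hα : 1 < α)
    (p p' : X → ℝ) (f f' : X → Y → ℝ)
    (hp : IsProb p) (hp' : IsProb p')
    (hf : ∀ x, IsProb (f x)) (hf' : ∀ x, IsProb (f' x)) :
    RenyiD α (fun xy : X × Y => p xy.1 * f xy.1 xy.2)
             (fun xy : X × Y => p' xy.1 * f' xy.1 xy.2)
      ≤ RenyiD α p p' + ⨆ x, RenyiD α (f x) (f' x) := by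
  change RenyiD α (jointDist p f) (jointDist p' f') ≤ _
  by_cases hpp' : ∀ x, p' x = 0 → p x = 0
  · by_cases hff' : ∀ x y, f' x y = 0 → f x y = 0
    · have : Nonempty X := let ⟨x, _⟩ := hp.exists_ne_zero; ⟨x⟩
      obtain ⟨x₀, hx₀⟩ := Finite.exists_max fun x => renyiSum α (f x) (f' x)
      calc RenyiD α (jointDist p f) (jointDist p' f')
          ≤ RenyiD α p p' + RenyiD α (f x₀) (f' x₀) :=
            renyiD_jointDist_le_of_absCont hα hp hp'.1 hf (fun x => (hf' x).1) hpp' hff' hx₀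
        _ ≤ RenyiD α p p' + ⨆ x, RenyiD α (f x) (f' x) := by
            gcongr; exact le_iSup_of_le x₀ le_rfl
    · push Not at hff'
      obtain ⟨x₀, y₀, hff'⟩ := hff'
      have hsup : ⨆ x, RenyiD α (f x) (f' x) = ⊤ := top_le_iff.mp <| le_iSup_of_le x₀ <|
        (renyiD_of_not_absCont fun h => hff'.2 (h y₀ hff'.1)).ge
      rw [hsup, EReal.add_top_of_ne_bot (renyiD_ne_bot α p p')]
      exact le_top
  · obtain ⟨x₀, -⟩ := not_forall.mp hpp'
    have hsup : ⨆ x, RenyiD α (f x) (f' x) ≠ ⊥ := fun h =>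
      renyiD_ne_bot α (f x₀) (f' x₀) <| le_bot_iff.mp <| h ▸ le_iSup_of_le x₀ le_rfl
    rw [renyiD_of_not_absCont hpp', EReal.top_add_of_ne_bot hsup]
    exact le_top

/-- Generalized chain rule inequality for the Rényi divergence of order `α > 1`. -/
theorem renyi_joint_le {X Y : Type*} [Fintype X] [Fintype Y] [Nonempty X]
    (α : ℝ) (hα : 1 < α)
    (p p' : X → ℝ) (f f' : X → Y → ℝ)
    (hp : IsProb p) (hp' : IsProb p')
    (hf : ∀ x, IsProb (f x)) (hf' : ∀ x, IsProb (f' x)) :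
    RenyiD α (fun xy : X × Y => p xy.1 * f xy.1 xy.2)
             (fun xy : X × Y => p' xy.1 * f' xy.1 xy.2)
      ≤ RenyiD α p p' + ⨆ x, RenyiD α (f x) (f' x) :=
  renyi_joint_le_general α hα p p' f f' hp hp' hf hf'
end

section
/- For a probability measure p on a standard Borel space X, the pushforward of p along the diagonal map x ↦ (x,x) is absolutely continuous with respect to the product measure p⊗p if and only if p is discrete (a countable sum of point masses). -/
/-!
If `p` is discrete, the diagonal pushforward is a sum of point masses `c i • δ (x i, x i)`, and
each such point carries mass at least `c i ^ 2` under `p ⊗ p`. Conversely, `p ⊗ p` gives the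
diagonal over `A` the mass `∫⁻ x in A, p {x} ∂p`, which vanishes on the set `A` of non-atoms,
whereas the diagonal pushforward gives it the mass `p A`. So absolute continuity forces `p` to live
on its atoms, of which there are only countably many.
-/

open MeasureTheory

/-- A measure is discrete if it is a countable weighted sum of Dirac measures. -/
def IsDiscreteMeasure {X : Type*} [MeasurableSpace X] (p : Measure X) : Prop :=
  ∃ (ι : Type) (_ : Countable ι) (x : ι → X) (c : ι → ENNReal),
    p = Measure.sum (fun i => c i • Measure.dirac (x i))

namespace MeasureTheory.Measure

open Set

variable {X : Type*} [MeasurableSpace X]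

theorem countable_setOf_measure_singleton_ne_zero [MeasurableSingletonClass X]
    (p : Measure X) [SFinite p] : {x | p {x} ≠ 0}.Countable := by
  simpa [pos_iff_ne_zero] using countable_meas_level_set_pos (μ := p) measurable_id

theorem measurable_measure_singleton [MeasurableEq X] (p : Measure X) [SFinite p] :
    Measurable fun x => p {x} := by
  have hslice (x : X) : Prod.mk x ⁻¹' diagonal X = {x} := by ext; simp [eq_comm]
  simpa only [hslice] using
    measurable_measure_prodMk_left (ν := p) (measurableSet_diagonal (α := X))

theorem prod_diagonal_inter_fst_preimage [MeasurableEq X] (μ ν : Measure X) [SFinite ν]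
    {A : Set X} (hA : MeasurableSet A) :
    μ.prod ν (diagonal X ∩ Prod.fst ⁻¹' A) = ∫⁻ x in A, ν {x} ∂μ := by
  rw [prod_apply ((measurableSet_diagonal (α := X)).inter (measurable_fst hA)),
    ← lintegral_indicator hA]
  congr 1 with x
  by_cases hx : x ∈ A
  · have hslice : Prod.mk x ⁻¹' (diagonal X ∩ Prod.fst ⁻¹' A) = {x} := by
      ext; simp [eq_comm, hx]
    rw [hslice, indicator_of_mem hx]
  · have hslice : Prod.mk x ⁻¹' (diagonal X ∩ Prod.fst ⁻¹' A) = ∅ := by ext; simp [hx]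
    rw [hslice, indicator_of_notMem hx, measure_empty]

theorem measure_setOf_measure_singleton_eq_zero_of_map_diag_absolutelyContinuous [MeasurableEq X]
    {p : Measure X} [SFinite p] (h : p.map (fun x => (x, x)) ≪ p.prod p) :
    p {x | p {x} = 0} = 0 := by
  set A := {x | p {x} = 0}
  have hA : MeasurableSet A := measurable_measure_singleton p (measurableSet_singleton 0)
  have hT : MeasurableSet (diagonal X ∩ Prod.fst ⁻¹' A) :=
    (measurableSet_diagonal (α := X)).inter (measurable_fst hA)
  have hnull : p.prod p (diagonal X ∩ Prod.fst ⁻¹' A) = 0 := by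
    rw [prod_diagonal_inter_fst_preimage p p hA]
    exact setLIntegral_eq_zero hA fun x hx => hx
  have hpre : (fun x => (x, x)) ⁻¹' (diagonal X ∩ Prod.fst ⁻¹' A) = A := by ext; simp
  have := h hnull
  rwa [map_apply (f := fun x => (x, x)) measurable_diag hT, hpre] at this

theorem dirac_absolutelyContinuous_of_ne_zero {ν : Measure X} {a : X} (ha : ν {a} ≠ 0) :
    dirac a ≪ ν := by
  refine AbsolutelyContinuous.mk fun s hs hνs => ?_
  have has : a ∉ s := fun has => ha (measure_mono_null (singleton_subset_iff.2 has) hνs)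
  rw [dirac_apply' _ hs, indicator_of_notMem has]

end MeasureTheory.Measure

section

open Measure Set

variable {X : Type*} [MeasurableSpace X]

theorem isDiscreteMeasure_sum_smul_dirac {ι : Type*} [Countable ι] (x : ι → X)
    (c : ι → ENNReal) :
    IsDiscreteMeasure (Measure.sum fun i => c i • dirac (x i)) := by
  let e := (equivShrink.{0} ι).symm
  exact ⟨Shrink ι, Countable.of_equiv ι e.symm, x ∘ e, c ∘ e, (sum_comp_equiv e _).symm⟩

theorem isDiscreteMeasure_of_measure_compl_eq_zero [MeasurableSingletonClass X] {p : Measure X}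
    {s : Set X} (hs : s.Countable) (hp : p sᶜ = 0) : IsDiscreteMeasure p := by
  have : Countable s := hs.to_subtype
  have hp_eq : p = Measure.sum fun x : s => p {(x : X)} • dirac (x : X) := by
    calc p = p.restrict (⋃ x : s, {(x : X)}) := by
          rw [iUnion_of_singleton_coe, restrict_eq_self_of_ae_mem (ae_iff.2 hp)]
      _ = _ := by
          rw [restrict_iUnion (fun x y hxy => disjoint_singleton.2 (Subtype.coe_ne_coe.2 hxy))
            (fun _ => measurableSet_singleton _)]
          simp_rw [restrict_singleton]
  exact hp_eq ▸ isDiscreteMeasure_sum_smul_dirac _ _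

theorem isDiscreteMeasure_of_measure_setOf_measure_singleton_eq_zero [MeasurableSingletonClass X]
    {p : Measure X} [SFinite p] (hp : p {x | p {x} = 0} = 0) : IsDiscreteMeasure p :=
  isDiscreteMeasure_of_measure_compl_eq_zero p.countable_setOf_measure_singleton_ne_zero
    (by simpa [compl_ofPred] using hp)

theorem IsDiscreteMeasure.map_diag_absolutelyContinuous_prod {p : Measure X} [SFinite p]
    (hp : IsDiscreteMeasure p) : p.map (fun x => (x, x)) ≪ p.prod p := by
  obtain ⟨ι, _, x, c, rfl⟩ := hp
  have hdiag : Measurable fun x : X => (x, x) := measurable_diag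
  rw [map_sum hdiag.aemeasurable]
  refine absolutelyContinuous_sum_left fun i => ?_
  rw [Measure.map_smul, map_dirac' hdiag]
  rcases eq_or_ne (c i) 0 with hc | hc
  · simp [hc]
  refine (dirac_absolutelyContinuous_of_ne_zero ?_).smul_left _
  set p := Measure.sum fun i => c i • dirac (x i)
  have hatom : c i ≤ p {x i} := by
    simpa using le_iff'.1 (le_sum (fun i => c i • dirac (x i)) i) {x i}
  rw [← singleton_prod_singleton, prod_prod]
  exact mul_ne_zero (ne_bot_of_le_ne_bot hc hatom) (ne_bot_of_le_ne_bot hc hatom)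

end

/-- The diagonal pushforward of `p` is absolutely continuous w.r.t. `p ⊗ p`
iff `p` is discrete. -/
theorem copy_ac_iff_discrete {X : Type*} [MeasurableSpace X] [StandardBorelSpace X]
    (p : Measure X) [IsProbabilityMeasure p] :
    p.map (fun x => (x, x)) ≪ p.prod p ↔ IsDiscreteMeasure p :=
  ⟨fun h => isDiscreteMeasure_of_measure_setOf_measure_singleton_eq_zero
      (Measure.measure_setOf_measure_singleton_eq_zero_of_map_diag_absolutelyContinuous h),
    IsDiscreteMeasure.map_diag_absolutelyContinuous_prod⟩
end

section
/- Total variation entropy in the standard Borel case: for a probability measure p on a standard Borel space X, the total variation distance between copy(p) (the pushforward of p along the diagonal) and p⊗p equals 1 − (p⊗p)(Δ), where Δ is the diagonal; equivalently it equals 1 − ∑_{x atom of p} p({x})². -/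
/-!
On the diagonal, `p ⊗ p` is the pushforward of `p` weighted by the atom masses `x ↦ p {x} ≤ 1`,
so `(p ⊗ p)|_Δ ≤ copy p`. For probability measures with `ν|_D ≤ μ`, splitting `S` along `D` gives
`ν S ≤ μ S + ν Dᶜ`, and the same bound for `Sᶜ` gives the reverse inequality; as `copy p` is
carried by `Δ`, the set `Δ` attains the bound, so the total variation is `(p ⊗ p) Δᶜ`. Finally
`(p ⊗ p) Δ = ∫ p {x} dp(x)`, which is a sum over the countably many atoms of `p`.
-/

open MeasureTheory

/-- Total variation distance between two measures: supremum over measurable sets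
of the absolute difference of the measures. -/
noncomputable def tv {Z : Type*} [MeasurableSpace Z] (μ ν : Measure Z) : ℝ :=
  ⨆ S : {S : Set Z // MeasurableSet S}, |(μ S).toReal - (ν S).toReal|

open Set

section TotalVariation

variable {Z : Type*} [MeasurableSpace Z] {μ ν : Measure Z}

theorem tv_eq_of_forall_le_of_eq {c : ℝ}
    (hle : ∀ S, MeasurableSet S → |μ.real S - ν.real S| ≤ c)
    {S₀ : Set Z} (hS₀ : MeasurableSet S₀) (heq : |μ.real S₀ - ν.real S₀| = c) :
    tv μ ν = c := by
  have hbdd : BddAbove (range fun S : {S : Set Z // MeasurableSet S} =>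
      |(μ S).toReal - (ν S).toReal|) := ⟨c, by rintro _ ⟨S, rfl⟩; exact hle S.1 S.2⟩
  exact le_antisymm (ciSup_le fun S => hle S.1 S.2)
    (heq ▸ le_ciSup hbdd (⟨S₀, hS₀⟩ : {S : Set Z // MeasurableSet S}))

variable [IsProbabilityMeasure μ] [IsProbabilityMeasure ν] {D : Set Z}

theorem abs_measureReal_sub_le_of_restrict_le (hD : MeasurableSet D) (hνμ : ν.restrict D ≤ μ)
    {S : Set Z} (hS : MeasurableSet S) : |μ.real S - ν.real S| ≤ ν.real Dᶜ := by
  have upper : ∀ T, MeasurableSet T → ν.real T ≤ μ.real T + ν.real Dᶜ := by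
    intro T hT
    have hTD : ν.real (T ∩ D) ≤ μ.real T := by
      rw [measureReal_def, measureReal_def, ← Measure.restrict_apply hT]
      exact ENNReal.toReal_mono (measure_ne_top μ T) (hνμ T)
    have hTDc : ν.real (T \ D) ≤ ν.real Dᶜ := measureReal_mono (sdiff_subset_compl T D)
    linarith [measureReal_inter_add_sdiff (s := T) hD (μ := ν)]
  have hS' := upper Sᶜ hS.compl
  rw [probReal_compl_eq_one_sub hS, probReal_compl_eq_one_sub hS] at hS'
  rw [abs_sub_le_iff]
  constructor <;> linarith [upper S hS]

theorem tv_eq_measureReal_compl_of_restrict_le (hD : MeasurableSet D) (hμD : μ D = 1)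
    (hνμ : ν.restrict D ≤ μ) : tv μ ν = ν.real Dᶜ := by
  refine tv_eq_of_forall_le_of_eq (fun S hS => abs_measureReal_sub_le_of_restrict_le hD hνμ hS)
    hD ?_
  rw [probReal_compl_eq_one_sub hD, measureReal_def, hμD, ENNReal.toReal_one]
  exact abs_of_nonneg (sub_nonneg.2 measureReal_le_one)

end TotalVariation

section Diagonal

variable {X : Type*} [MeasurableSpace X] [MeasurableEq X] (μ : Measure X)

theorem Measure.prod_restrict_diagonal [SFinite μ] :
    (μ.prod μ).restrict (diagonal X) = (μ.withDensity fun x => μ {x}).map fun x => (x, x) := by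
  have hdiag : Measurable fun x : X => (x, x) := by fun_prop
  ext S hS
  rw [Measure.restrict_apply hS, Measure.map_apply hdiag hS, withDensity_apply _ (hdiag hS),
    Measure.prod_apply (hS.inter measurableSet_diagonal),
    ← lintegral_indicator (hdiag hS)]
  refine lintegral_congr fun x => ?_
  have hfiber : Prod.mk x ⁻¹' (S ∩ diagonal X) = ((fun y => (y, y)) ⁻¹' S) ∩ {x} := by
    ext y
    simp only [mem_preimage, mem_inter_iff, mem_diagonal_iff, mem_singleton_iff]
    grind
  rw [hfiber]
  by_cases hx : x ∈ (fun y => (y, y)) ⁻¹' S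
  · rw [indicator_of_mem hx, inter_eq_self_of_subset_right (singleton_subset_iff.2 hx)]
  · rw [indicator_of_notMem hx, inter_singleton_eq_empty.2 hx, measure_empty]

theorem Measure.prod_restrict_diagonal_le_map [IsZeroOrProbabilityMeasure μ] :
    (μ.prod μ).restrict (diagonal X) ≤ μ.map fun x => (x, x) := by
  rw [Measure.prod_restrict_diagonal]
  refine Measure.map_mono ?_ (by fun_prop)
  calc μ.withDensity (fun x => μ {x}) ≤ μ.withDensity 1 :=
        withDensity_mono (ae_of_all _ fun x => prob_le_one)
    _ = μ := withDensity_one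

theorem lintegral_measure_singleton [SFinite μ] :
    ∫⁻ x, μ {x} ∂μ = ∑' x, μ {x} ^ 2 := by
  set A := {x | 0 < μ {x}}
  have hA : A.Countable := by
    simpa [ofPred_eq_eq_singleton'] using Measure.countable_meas_level_set_pos (μ := μ) measurable_id
  have hsupp : (fun x => μ {x}).support ⊆ A := fun x hx => pos_iff_ne_zero.2 hx
  rw [← setLIntegral_eq_of_support_subset hsupp, lintegral_countable _ hA]
  simp_rw [← sq]
  exact tsum_subtype_eq_of_support_subset (f := fun x => μ {x} ^ 2) fun x hx =>
    hsupp (by simpa using hx)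

theorem Measure.prod_diagonal [SFinite μ] : (μ.prod μ) (diagonal X) = ∑' x, μ {x} ^ 2 := by
  rw [← Measure.restrict_apply_univ, Measure.prod_restrict_diagonal,
    Measure.map_apply (by fun_prop) MeasurableSet.univ, preimage_univ,
    withDensity_apply _ MeasurableSet.univ, Measure.restrict_univ, lintegral_measure_singleton]

end Diagonal

/-- Total variation entropy in the standard Borel case: it equals
`1 − (p⊗p)(Δ)`, which is `1 − ∑ₓ p({x})²`. -/
theorem tv_entropy_standard_borel {X : Type*} [MeasurableSpace X]
    [StandardBorelSpace X] (p : Measure X) [IsProbabilityMeasure p] :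
    tv (p.map (fun x => (x, x))) (p.prod p)
        = 1 - ((p.prod p) (Set.diagonal X)).toReal ∧
      tv (p.map (fun x => (x, x))) (p.prod p)
        = 1 - ∑' x : X, (p {x}).toReal ^ 2 := by
  have hΔ : MeasurableSet (diagonal X) := measurableSet_diagonal
  have hdiag : Measurable fun x : X => (x, x) := by fun_prop
  have := Measure.isProbabilityMeasure_map (μ := p) hdiag.aemeasurable
  have hcopy : p.map (fun x => (x, x)) (diagonal X) = 1 := by
    rw [Measure.map_apply hdiag hΔ]
    simp [preimage]
  have htv := tv_eq_measureReal_compl_of_restrict_le hΔ hcopy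
    (Measure.prod_restrict_diagonal_le_map p)
  rw [probReal_compl_eq_one_sub hΔ, measureReal_def] at htv
  refine ⟨htv, htv.trans ?_⟩
  rw [Measure.prod_diagonal, ENNReal.tsum_toReal_eq fun x => by finiteness]
  simp_rw [ENNReal.toReal_pow]
end
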